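/- arXiv:1504.00553 — 3 statements merged into one kernel-verified Lean document; each statement's English description precedes it below -/
import Mathlib

section
/- If X and Y are independent and V — X — Y form a Markov chain, then for any function f, I(f(X,Y); V | Y) = I((f(X,Y), Y); V). -/
open scoped BigOperators

namespace Caching

/-- A finitely supported probability mass function on the sample space `Ω`. -/
structure FinPMF (Ω : Type*) [Fintype Ω] where
  p : Ω → ℝ
  nonneg : ∀ ω, 0 ≤ p ω
  sum_one : ∑ ω, p ω = 1

variable {Ω : Type*} [Fintype Ω]

/-- The probability that the random variable `X` takes the value `x`. -/
def prob {α : Type*} [DecidableEq α] (μ : FinPMF Ω) (X : Ω → α) (x : α) : ℝ :=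
  ∑ ω, if X ω = x then μ.p ω else 0

/-- Shannon entropy (in bits) of a finite discrete random variable. -/
noncomputable def H {α : Type*} [Fintype α] [DecidableEq α] (μ : FinPMF Ω) (X : Ω → α) : ℝ :=
  -∑ x, prob μ X x * Real.logb 2 (prob μ X x)

/-- Conditional entropy `H(X | Y)` (in bits). -/
noncomputable def condH {α β : Type*} [Fintype α] [DecidableEq α] [Fintype β] [DecidableEq β]
    (μ : FinPMF Ω) (X : Ω → α) (Y : Ω → β) : ℝ :=
  H μ (fun ω => (X ω, Y ω)) - H μ Y

/-- Mutual information `I(X; Y)` (in bits). -/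
noncomputable def mutInfo {α β : Type*} [Fintype α] [DecidableEq α] [Fintype β] [DecidableEq β]
    (μ : FinPMF Ω) (X : Ω → α) (Y : Ω → β) : ℝ :=
  H μ X + H μ Y - H μ (fun ω => (X ω, Y ω))

/-- Conditional mutual information `I(X; Y | Z)` (in bits). -/
noncomputable def condMutInfo {α β γ : Type*} [Fintype α] [DecidableEq α] [Fintype β]
    [DecidableEq β] [Fintype γ] [DecidableEq γ]
    (μ : FinPMF Ω) (X : Ω → α) (Y : Ω → β) (Z : Ω → γ) : ℝ :=
  condH μ X Z + condH μ Y Z - condH μ (fun ω => (X ω, Y ω)) Z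

/-- `X` and `Y` are independent. -/
def Indep {α β : Type*} [DecidableEq α] [DecidableEq β]
    (μ : FinPMF Ω) (X : Ω → α) (Y : Ω → β) : Prop :=
  ∀ x y, prob μ (fun ω => (X ω, Y ω)) (x, y) = prob μ X x * prob μ Y y

/-- `V — X — Y` form a Markov chain: `V` and `Y` are conditionally independent given `X`. -/
def MarkovChain {α β γ : Type*} [DecidableEq α] [DecidableEq β] [DecidableEq γ]
    (μ : FinPMF Ω) (V : Ω → γ) (X : Ω → α) (Y : Ω → β) : Prop :=
  ∀ v x y, prob μ (fun ω => (V ω, X ω, Y ω)) (v, x, y) * prob μ X x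
    = prob μ (fun ω => (V ω, X ω)) (v, x) * prob μ (fun ω => (X ω, Y ω)) (x, y)


section Aux

variable {α β γ : Type*}

lemma prob_nonneg [DecidableEq α] (μ : FinPMF Ω) (X : Ω → α) (x : α) :
    0 ≤ prob μ X x := by
  apply Finset.sum_nonneg
  intro ω _
  split <;> simp [μ.nonneg ω]

lemma p_eq_zero [DecidableEq α] (μ : FinPMF Ω) (X : Ω → α) (x : α)
    (h : prob μ X x = 0) (ω : Ω) (hω : X ω = x) : μ.p ω = 0 := by
  have h0 : ∀ ω' ∈ Finset.univ, (0:ℝ) ≤ (if X ω' = x then μ.p ω' else 0) := by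
    intro ω' _; split <;> simp [μ.nonneg ω']
  have := (Finset.sum_eq_zero_iff_of_nonneg h0).mp h ω (Finset.mem_univ ω)
  simpa [hω] using this

lemma sum_prob [Fintype α] [DecidableEq α] (μ : FinPMF Ω) (X : Ω → α) :
    ∑ x, prob μ X x = 1 := by
  unfold prob
  rw [Finset.sum_comm]
  have : ∀ ω : Ω, ∑ x, (if X ω = x then μ.p ω else 0) = μ.p ω := by
    intro ω; simp
  simp only [this, μ.sum_one]

lemma prob_comp_inj [DecidableEq α] [DecidableEq β] (μ : FinPMF Ω) (W : Ω → α)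
    (g : α → β) (hg : Function.Injective g) (a : α) :
    prob μ (fun ω => g (W ω)) (g a) = prob μ W a := by
  unfold prob
  congr 1; ext ω
  simp [hg.eq_iff]

lemma prob_comp_zero [DecidableEq β] (μ : FinPMF Ω) (W : Ω → α)
    (g : α → β) (b : β) (hb : ∀ a, g a ≠ b) :
    prob μ (fun ω => g (W ω)) b = 0 := by
  unfold prob
  apply Finset.sum_eq_zero
  intro ω _
  simp [hb (W ω)]

lemma H_comp_inj [Fintype α] [DecidableEq α] [Fintype β] [DecidableEq β]
    (μ : FinPMF Ω) (W : Ω → α) (g : α → β) (hg : Function.Injective g) :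
    H μ (fun ω => g (W ω)) = H μ W := by
  unfold H
  congr 1
  calc ∑ b : β, prob μ (fun ω => g (W ω)) b * Real.logb 2 (prob μ (fun ω => g (W ω)) b)
      = ∑ b ∈ Finset.univ.image g,
          prob μ (fun ω => g (W ω)) b * Real.logb 2 (prob μ (fun ω => g (W ω)) b) := by
        symm
        apply Finset.sum_subset (Finset.subset_univ _)
        intro b _ hb
        have : ∀ a, g a ≠ b := fun a h =>
          hb (Finset.mem_image.mpr ⟨a, Finset.mem_univ a, h⟩)
        rw [prob_comp_zero μ W g b this]
        simp
    _ = ∑ a : α, prob μ (fun ω => g (W ω)) (g a)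
          * Real.logb 2 (prob μ (fun ω => g (W ω)) (g a)) :=
        Finset.sum_image (fun a _ a' _ h => hg h)
    _ = ∑ a : α, prob μ W a * Real.logb 2 (prob μ W a) := by
        simp only [prob_comp_inj μ W g hg]

lemma prob_marg_fst [Fintype β] [DecidableEq α] [DecidableEq β]
    (μ : FinPMF Ω) (A : Ω → α) (B : Ω → β) (a : α) :
    prob μ A a = ∑ b, prob μ (fun ω => (A ω, B ω)) (a, b) := by
  unfold prob
  rw [Finset.sum_comm]
  apply Finset.sum_congr rfl
  intro ω _
  simp [Prod.ext_iff, ite_and]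

lemma prob_marg_mid [Fintype β] [DecidableEq α] [DecidableEq β] [DecidableEq γ]
    (μ : FinPMF Ω) (A : Ω → α) (B : Ω → β) (C : Ω → γ) (a : α) (c : γ) :
    prob μ (fun ω => (A ω, C ω)) (a, c)
      = ∑ b, prob μ (fun ω => (A ω, B ω, C ω)) (a, b, c) := by
  unfold prob
  rw [Finset.sum_comm]
  apply Finset.sum_congr rfl
  intro ω _
  by_cases hA : A ω = a <;> by_cases hC : C ω = c <;>
    simp [Prod.ext_iff, ite_and, hA, hC]

lemma H_pair_of_indep [Fintype α] [DecidableEq α] [Fintype β] [DecidableEq β]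
    (μ : FinPMF Ω) (A : Ω → α) (B : Ω → β) (h : Indep μ A B) :
    H μ (fun ω => (A ω, B ω)) = H μ A + H μ B := by
  unfold H
  rw [← neg_add]
  congr 1
  rw [Fintype.sum_prod_type]
  have key : ∀ (a : α) (b : β),
      prob μ (fun ω => (A ω, B ω)) (a, b)
        * Real.logb 2 (prob μ (fun ω => (A ω, B ω)) (a, b))
      = prob μ B b * (prob μ A a * Real.logb 2 (prob μ A a))
        + prob μ A a * (prob μ B b * Real.logb 2 (prob μ B b)) := by
    intro a b
    rw [h a b]
    rcases eq_or_ne (prob μ A a) 0 with ha | ha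
    · simp [ha]
    rcases eq_or_ne (prob μ B b) 0 with hb | hb
    · simp [hb]
    rw [Real.logb, Real.log_mul ha hb]
    unfold Real.logb
    ring
  simp only [key, Finset.sum_add_distrib]
  rw [show (∑ a : α, ∑ b : β, prob μ B b * (prob μ A a * Real.logb 2 (prob μ A a)))
      = ∑ a : α, (∑ b : β, prob μ B b) * (prob μ A a * Real.logb 2 (prob μ A a)) by
    simp [Finset.sum_mul]]
  rw [show (∑ a : α, ∑ b : β, prob μ A a * (prob μ B b * Real.logb 2 (prob μ B b)))
      = (∑ a : α, prob μ A a) * (∑ b : β, prob μ B b * Real.logb 2 (prob μ B b)) by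
    rw [Finset.sum_mul]
    exact Finset.sum_congr rfl fun a _ => (Finset.mul_sum _ _ _).symm]
  rw [sum_prob μ A, sum_prob μ B]
  simp

end Aux

/-- If `X ⫫ Y` and `V — X — Y` form a Markov chain, then for any function `f`,
`I(f(X,Y); V | Y) = I((f(X,Y), Y); V)`. -/
theorem condMutInfo_fn_eq_mutInfo_pair
    {Ω α β γ S : Type*} [Fintype Ω] [Fintype α] [DecidableEq α] [Fintype β] [DecidableEq β]
    [Fintype γ] [DecidableEq γ] [Fintype S] [DecidableEq S]
    (μ : FinPMF Ω) (X : Ω → α) (Y : Ω → β) (V : Ω → γ) (f : α → β → S)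
    (hXY : Indep μ X Y) (hMC : MarkovChain μ V X Y) :
    condMutInfo μ (fun ω => f (X ω) (Y ω)) V Y
      = mutInfo μ (fun ω => (f (X ω) (Y ω), Y ω)) V := by
  -- Step 1: `p(v,x,y) = p(v,x) p(y)`.
  have hVXY : ∀ v x y, prob μ (fun ω => (V ω, X ω, Y ω)) (v, x, y)
      = prob μ (fun ω => (V ω, X ω)) (v, x) * prob μ Y y := by
    intro v x y
    rcases eq_or_ne (prob μ X x) 0 with hx | hx
    · have h1 : prob μ (fun ω => (V ω, X ω, Y ω)) (v, x, y) = 0 := by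
        apply Finset.sum_eq_zero
        intro ω _
        split
        · next h => exact p_eq_zero μ X x hx ω (by simpa using congrArg (fun p => p.2.1) h)
        · rfl
      have h2 : prob μ (fun ω => (V ω, X ω)) (v, x) = 0 := by
        apply Finset.sum_eq_zero
        intro ω _
        split
        · next h => exact p_eq_zero μ X x hx ω (by simpa using congrArg Prod.snd h)
        · rfl
      rw [h1, h2, zero_mul]
    · have := hMC v x y
      rw [hXY x y] at this
      have h3 : prob μ (fun ω => (V ω, X ω, Y ω)) (v, x, y) * prob μ X x
          = (prob μ (fun ω => (V ω, X ω)) (v, x) * prob μ Y y) * prob μ X x := by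
        rw [this]; ring
      exact mul_right_cancel₀ hx h3
  -- Step 2: `V ⫫ Y`.
  have hVY : Indep μ V Y := by
    intro v y
    rw [prob_marg_mid μ V X Y v y]
    simp only [hVXY]
    rw [← Finset.sum_mul, ← prob_marg_fst μ V X v]
  -- Step 3: entropy identities.
  have h1 : H μ (fun ω => (V ω, Y ω)) = H μ V + H μ Y := H_pair_of_indep μ V Y hVY
  have h2 : H μ (fun ω => ((f (X ω) (Y ω), V ω), Y ω))
      = H μ (fun ω => ((f (X ω) (Y ω), Y ω), V ω)) := by
    have hg : Function.Injective (fun p : (S × γ) × β => ((p.1.1, p.2), p.1.2)) := by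
      intro ⟨⟨s, v⟩, y⟩ ⟨⟨s', v'⟩, y'⟩ h
      simp only [Prod.mk.injEq] at h
      simp [h.1.1, h.1.2, h.2]
    exact (H_comp_inj μ (fun ω => ((f (X ω) (Y ω), V ω), Y ω))
      (fun p => ((p.1.1, p.2), p.1.2)) hg).symm
  simp only [condMutInfo, condH, mutInfo]
  linarith [h1, h2]

end Caching
end

section
/- Suppose (R_c, R_u) satisfies R_c ≥ I(X; V | Y) and R_u ≥ H(f(X,Y) | V, Y) for some test channel p_{V|X}. Then for every a ∈ [0, R_c], the pair (R_c − a, R_u + a) also satisfies these constraints for some (possibly different) test channel. -/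
open scoped BigOperators

namespace Caching

variable {Ω : Type*} [Fintype Ω]

/-- The joint law on `V × X × Y` induced by a test channel `W = p_{V|X}` and a source pmf `p`. -/
noncomputable def inducedPMF {n : ℕ} {α β : Type*} [Fintype α] [Fintype β]
    (p : α × β → ℝ) (hp0 : ∀ a, 0 ≤ p a) (hp1 : ∑ a, p a = 1)
    (W : Fin n → α → ℝ) (hW0 : ∀ v x, 0 ≤ W v x) (hW1 : ∀ x, ∑ v, W v x = 1) :
    FinPMF (Fin n × α × β) where
  p := fun ω => W ω.1 ω.2.1 * p ω.2
  nonneg := fun ω => mul_nonneg (hW0 _ _) (hp0 _)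
  sum_one := by
    have h : ∑ ω : Fin n × α × β, W ω.1 ω.2.1 * p ω.2
        = ∑ a : α × β, (∑ v, W v a.1) * p a := by
      rw [Fintype.sum_prod_type, Finset.sum_comm]
      simp [Finset.sum_mul]
    rw [h]
    simp only [hW1, one_mul]
    exact hp1

/-- The single-letter rate region for the single-user caching problem:
pairs `(R_c, R_u)` with `R_c ≥ I(X; V | Y)` and `R_u ≥ H(f(X,Y) | V, Y)` for some
test channel `p_{V|X}` over a finite alphabet (so that `V — X — Y` is a Markov chain). -/
noncomputable def cacheRegion {α β S : Type*} [Fintype α] [DecidableEq α]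
    [Fintype β] [DecidableEq β] [Fintype S] [DecidableEq S]
    (p : α × β → ℝ) (hp0 : ∀ a, 0 ≤ p a) (hp1 : ∑ a, p a = 1)
    (f : α → β → S) : Set (ℝ × ℝ) :=
  {R | ∃ (n : ℕ) (W : Fin n → α → ℝ) (hW0 : ∀ v x, 0 ≤ W v x) (hW1 : ∀ x, ∑ v, W v x = 1),
    R.1 ≥ condMutInfo (inducedPMF p hp0 hp1 W hW0 hW1)
            (fun ω => ω.2.1) (fun ω => ω.1) (fun ω => ω.2.2) ∧
    R.2 ≥ condH (inducedPMF p hp0 hp1 W hW0 hW1)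
            (fun ω => f ω.2.1 ω.2.2) (fun ω => (ω.1, ω.2.2))}

/-!
Time sharing: the test channel that follows `W` with probability `t` and otherwise emits a fresh
constant symbol scales `I(X; V | Y)` by `t` and turns `H(F | V, Y)` into
`t H(F | V, Y) + (1 - t) H(F | Y)`, the binary entropy of the switch cancelling in both.
Taking `t = 1 - a / R_c`, the sum-rate bound `H(F | Y) ≤ I(X; V | Y) + H(F | V, Y)` shows that
this moves rate `a` from the cache to the update. The sum-rate bound follows from the
submodularity of entropy, which is Gibbs' inequality against the law `q(a, z) q(b, z) / q(z)`.
-/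

section Entropy

variable {α β γ : Type*}

lemma prob_comp [Fintype α] [DecidableEq α] [DecidableEq β] (μ : FinPMF Ω) (X : Ω → α)
    (g : α → β) (y : β) :
    prob μ (fun ω => g (X ω)) y = ∑ x with g x = y, prob μ X x := by
  simp only [prob]
  rw [Finset.sum_comm]
  refine Finset.sum_congr rfl fun ω _ => ?_
  simp [Finset.sum_ite_eq]

lemma prob_le_prob_comp [DecidableEq α] [DecidableEq β] (μ : FinPMF Ω) (X : Ω → α)
    (g : α → β) (x : α) : prob μ X x ≤ prob μ (fun ω => g (X ω)) (g x) :=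
  Finset.sum_le_sum fun ω _ => by split_ifs <;> simp_all [μ.nonneg ω]

lemma prob_comp_of_injective [DecidableEq α] [DecidableEq β] (μ : FinPMF Ω) (X : Ω → α)
    {g : α → β} (hg : g.Injective) (x : α) : prob μ (fun ω => g (X ω)) (g x) = prob μ X x := by
  simp only [prob, hg.eq_iff]

lemma sum_prob_pair_left [Fintype α] [DecidableEq α] [DecidableEq β] (μ : FinPMF Ω)
    (X : Ω → α) (Y : Ω → β) (y : β) :
    ∑ x, prob μ (fun ω => (X ω, Y ω)) (x, y) = prob μ Y y := by
  simp only [prob]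
  rw [Finset.sum_comm]
  refine Finset.sum_congr rfl fun ω _ => ?_
  simp [Prod.ext_iff, ite_and]

lemma H_comp_eq_sum [Fintype α] [DecidableEq α] [Fintype β] [DecidableEq β] (μ : FinPMF Ω)
    (X : Ω → α) (g : α → β) :
    H μ (fun ω => g (X ω))
      = -∑ x, prob μ X x * Real.logb 2 (prob μ (fun ω => g (X ω)) (g x)) := by
  rw [H, ← Finset.sum_fiberwise Finset.univ g]
  congr 1
  refine Finset.sum_congr rfl fun y _ => ?_
  rw [prob_comp, Finset.sum_mul]
  exact Finset.sum_congr rfl fun x hx => by rw [(Finset.mem_filter.1 hx).2, ← prob_comp]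

lemma H_comp_of_injective [Fintype α] [DecidableEq α] [Fintype β] [DecidableEq β]
    (μ : FinPMF Ω) (X : Ω → α) {g : α → β} (hg : g.Injective) :
    H μ (fun ω => g (X ω)) = H μ X := by
  rw [H_comp_eq_sum]
  simp only [prob_comp_of_injective μ X hg, H]

lemma H_eq_sum_negMulLog [Fintype α] [DecidableEq α] (μ : FinPMF Ω) (X : Ω → α) :
    H μ X = (∑ x, Real.negMulLog (prob μ X x)) / Real.log 2 := by
  simp only [H, Real.negMulLog, Real.logb, Finset.sum_div, ← Finset.sum_neg_distrib]
  exact Finset.sum_congr rfl fun x _ => by ring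

end Entropy

section Shannon

variable {α β γ : Type*} [Fintype α] [DecidableEq α] [Fintype β] [DecidableEq β]
  [Fintype γ] [DecidableEq γ]

lemma mul_logb_div_le {q r : ℝ} (hq : 0 ≤ q) (hr : 0 ≤ r) (hqr : 0 < q → 0 < r) :
    q * Real.logb 2 (r / q) ≤ (r - q) / Real.log 2 := by
  have hlog2 : 0 < Real.log 2 := Real.log_pos one_lt_two
  rcases hq.eq_or_lt with rfl | hq
  · simpa using div_nonneg hr hlog2.le
  have hrq : 0 < r / q := div_pos (hqr hq) hq
  calc q * Real.logb 2 (r / q) = q * Real.log (r / q) / Real.log 2 := by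
        rw [Real.logb, mul_div_assoc]
    _ ≤ q * (r / q - 1) / Real.log 2 := by
        gcongr
        exact Real.log_le_sub_one_of_pos hrq
    _ = (r - q) / Real.log 2 := by field_simp

lemma sum_prob_mul_prob_div_prob_le_one (μ : FinPMF Ω) (A : Ω → α) (B : Ω → β) (Z : Ω → γ) :
    ∑ t : α × β × γ, prob μ (fun ω => (A ω, Z ω)) (t.1, t.2.2)
      * prob μ (fun ω => (B ω, Z ω)) (t.2.1, t.2.2) / prob μ Z t.2.2 ≤ 1 := by
  have hfiber : ∀ a z, ∑ b, prob μ (fun ω => (A ω, Z ω)) (a, z)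
      * prob μ (fun ω => (B ω, Z ω)) (b, z) / prob μ Z z ≤ prob μ (fun ω => (A ω, Z ω)) (a, z) := by
    intro a z
    simp only [mul_div_assoc, ← Finset.mul_sum, ← Finset.sum_div, sum_prob_pair_left]
    rcases (prob_nonneg μ Z z).eq_or_lt with h | h
    · simp [← h, prob_nonneg]
    · simp [h.ne']
  calc _ = ∑ a, ∑ z, ∑ b, prob μ (fun ω => (A ω, Z ω)) (a, z)
        * prob μ (fun ω => (B ω, Z ω)) (b, z) / prob μ Z z := by
        simp only [Fintype.sum_prod_type]
        exact Finset.sum_congr rfl fun a _ => Finset.sum_comm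
    _ ≤ ∑ a, ∑ z, prob μ (fun ω => (A ω, Z ω)) (a, z) :=
        Finset.sum_le_sum fun a _ => Finset.sum_le_sum fun z _ => hfiber a z
    _ = 1 := by rw [← Fintype.sum_prod_type', sum_prob]

theorem H_triple_add_H_le (μ : FinPMF Ω) (A : Ω → α) (B : Ω → β) (Z : Ω → γ) :
    H μ (fun ω => (A ω, B ω, Z ω)) + H μ Z
      ≤ H μ (fun ω => (A ω, Z ω)) + H μ (fun ω => (B ω, Z ω)) := by
  set T : Ω → α × β × γ := fun ω => (A ω, B ω, Z ω)
  set q : α × β × γ → ℝ := prob μ T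
  set qAZ : α × β × γ → ℝ := fun t => prob μ (fun ω => (A ω, Z ω)) (t.1, t.2.2)
  set qBZ : α × β × γ → ℝ := fun t => prob μ (fun ω => (B ω, Z ω)) (t.2.1, t.2.2)
  set qZ : α × β × γ → ℝ := fun t => prob μ Z t.2.2
  have hAZ : H μ (fun ω => (A ω, Z ω)) = -∑ t, q t * Real.logb 2 (qAZ t) :=
    H_comp_eq_sum μ T (fun t => (t.1, t.2.2))
  have hBZ : H μ (fun ω => (B ω, Z ω)) = -∑ t, q t * Real.logb 2 (qBZ t) :=
    H_comp_eq_sum μ T (fun t => (t.2.1, t.2.2))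
  have hZ : H μ Z = -∑ t, q t * Real.logb 2 (qZ t) := H_comp_eq_sum μ T (fun t => t.2.2)
  have hT : H μ T = -∑ t, q t * Real.logb 2 (q t) := rfl
  have hmarg : ∀ t, 0 < q t → 0 < qAZ t ∧ 0 < qBZ t ∧ 0 < qZ t := fun t h =>
    ⟨h.trans_le (prob_le_prob_comp μ T (fun t => (t.1, t.2.2)) t),
      h.trans_le (prob_le_prob_comp μ T (fun t => (t.2.1, t.2.2)) t),
      h.trans_le (prob_le_prob_comp μ T (fun t => t.2.2) t)⟩
  have hterm : ∀ t, q t * Real.logb 2 (qAZ t) + q t * Real.logb 2 (qBZ t)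
      - q t * Real.logb 2 (q t) - q t * Real.logb 2 (qZ t)
      = q t * Real.logb 2 (qAZ t * qBZ t / qZ t / q t) := by
    intro t
    rcases (prob_nonneg μ T t).eq_or_lt with h | h
    · simp [q, ← h]
    obtain ⟨hA, hB, hZ⟩ := hmarg t h
    rw [Real.logb_div (by positivity) h.ne', Real.logb_div (by positivity) hZ.ne',
      Real.logb_mul hA.ne' hB.ne']
    ring
  have hgibbs : ∑ t, q t * Real.logb 2 (qAZ t * qBZ t / qZ t / q t)
      ≤ (∑ t, qAZ t * qBZ t / qZ t - ∑ t, q t) / Real.log 2 := by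
    rw [← Finset.sum_sub_distrib, Finset.sum_div]
    refine Finset.sum_le_sum fun t _ => mul_logb_div_le (prob_nonneg μ T t)
      (div_nonneg (mul_nonneg (prob_nonneg _ _ _) (prob_nonneg _ _ _)) (prob_nonneg _ _ _))
      fun h => ?_
    obtain ⟨hA, hB, hZ⟩ := hmarg t h
    positivity
  have hmass : ∑ t, qAZ t * qBZ t / qZ t - ∑ t, q t ≤ 0 := by
    rw [sum_prob μ T]
    linarith [sum_prob_mul_prob_div_prob_le_one μ A B Z]
  have hlog2 : 0 < Real.log 2 := Real.log_pos one_lt_two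
  have hgap := div_nonpos_of_nonpos_of_nonneg hmass hlog2.le
  simp only [← hterm, Finset.sum_sub_distrib, Finset.sum_add_distrib] at hgibbs
  rw [hAZ, hBZ, hZ, hT]
  linarith

end Shannon

section RateIdentities

variable {α β γ δ : Type*} [Fintype α] [DecidableEq α] [Fintype β] [DecidableEq β]
  [Fintype γ] [DecidableEq γ] [Fintype δ] [DecidableEq δ]

lemma condMutInfo_eq (μ : FinPMF Ω) (X : Ω → α) (V : Ω → β) (Y : Ω → γ) :
    condMutInfo μ X V Y = H μ (fun ω => (X ω, Y ω)) + H μ (fun ω => (V ω, Y ω))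
      - H μ (fun ω => (V ω, X ω, Y ω)) - H μ Y := by
  have hswap : H μ (fun ω => ((X ω, V ω), Y ω)) = H μ (fun ω => (V ω, X ω, Y ω)) :=
    H_comp_of_injective μ (fun ω => (V ω, X ω, Y ω))
      (g := fun t : β × α × γ => ((t.2.1, t.1), t.2.2)) fun s t h => by
        simp only [Prod.ext_iff] at h ⊢; tauto
  rw [condMutInfo, condH, condH, condH, hswap]
  ring

lemma condH_pair_eq (μ : FinPMF Ω) (F : Ω → α) (V : Ω → β) (Y : Ω → γ) :
    condH μ F (fun ω => (V ω, Y ω))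
      = H μ (fun ω => (V ω, F ω, Y ω)) - H μ (fun ω => (V ω, Y ω)) := by
  rw [condH, H_comp_of_injective μ (fun ω => (V ω, F ω, Y ω))
    (g := fun t : β × α × γ => (t.2.1, t.1, t.2.2)) fun s t h => by
      simp only [Prod.ext_iff] at h ⊢; tauto]

theorem condH_le_condMutInfo_add_condH (μ : FinPMF Ω) (X : Ω → α) (V : Ω → β) (Y : Ω → γ)
    (f : α → γ → δ) :
    condH μ (fun ω => f (X ω) (Y ω)) Y
      ≤ condMutInfo μ X V Y + condH μ (fun ω => f (X ω) (Y ω)) (fun ω => (V ω, Y ω)) := by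
  have hsub := H_triple_add_H_le μ X V (fun ω => (f (X ω) (Y ω), Y ω))
  have hXVY : H μ (fun ω => (X ω, V ω, f (X ω) (Y ω), Y ω)) = H μ (fun ω => (V ω, X ω, Y ω)) :=
    H_comp_of_injective μ (fun ω => (V ω, X ω, Y ω))
      (g := fun t : β × α × γ => (t.2.1, t.1, f t.2.1 t.2.2, t.2.2)) fun s t h => by
        simp only [Prod.ext_iff] at h ⊢; tauto
  have hXY : H μ (fun ω => (X ω, f (X ω) (Y ω), Y ω)) = H μ (fun ω => (X ω, Y ω)) :=
    H_comp_of_injective μ (fun ω => (X ω, Y ω))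
      (g := fun t : α × γ => (t.1, f t.1 t.2, t.2)) fun s t h => by
        simp only [Prod.ext_iff] at h ⊢; tauto
  rw [hXVY, hXY] at hsub
  rw [condH, condMutInfo_eq, condH_pair_eq]
  linarith

end RateIdentities

lemma sum_negMulLog_const_mul {ι : Type*} (s : Finset ι) (c : ℝ) (q : ι → ℝ) :
    ∑ i ∈ s, Real.negMulLog (c * q i)
      = c * ∑ i ∈ s, Real.negMulLog (q i) + (∑ i ∈ s, q i) * Real.negMulLog c := by
  simp only [Real.negMulLog_mul, Finset.sum_add_distrib, Finset.mul_sum, Finset.sum_mul]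
  rw [add_comm]

section TimeShare

variable {α : Type*} {n : ℕ}

def timeShare (t : ℝ) (W : Fin n → α → ℝ) : Fin (n + 1) → α → ℝ :=
  Fin.lastCases (fun _ => 1 - t) fun v x => t * W v x

lemma timeShare_nonneg {t : ℝ} (ht0 : 0 ≤ t) (ht1 : t ≤ 1) {W : Fin n → α → ℝ}
    (hW0 : ∀ v x, 0 ≤ W v x) (v : Fin (n + 1)) (x : α) : 0 ≤ timeShare t W v x := by
  induction v using Fin.lastCases with
  | last => simpa [timeShare] using ht1
  | cast v => simpa [timeShare] using mul_nonneg ht0 (hW0 v x)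

lemma sum_timeShare (t : ℝ) {W : Fin n → α → ℝ} (hW1 : ∀ x, ∑ v, W v x = 1) (x : α) :
    ∑ v, timeShare t W v x = 1 := by
  simp [timeShare, Fin.sum_univ_castSucc, ← Finset.mul_sum, hW1]

end TimeShare

section InducedPMF

variable {α β γ : Type*} [Fintype α] [Fintype β] [DecidableEq γ] {n : ℕ}
  (p : α × β → ℝ) (hp0 : ∀ a, 0 ≤ p a) (hp1 : ∑ a, p a = 1)
  (W : Fin n → α → ℝ) (hW0 : ∀ v x, 0 ≤ W v x) (hW1 : ∀ x, ∑ v, W v x = 1)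

lemma prob_inducedPMF_pair (g : α × β → γ) (v : Fin n) (s : γ) :
    prob (inducedPMF p hp0 hp1 W hW0 hW1) (fun ω => (ω.1, g ω.2)) (v, s)
      = ∑ a with g a = s, W v a.1 * p a := by
  simp only [prob, inducedPMF, Prod.ext_iff, Finset.sum_filter, ite_and]
  rw [Fintype.sum_prod_type]
  simp

lemma prob_inducedPMF_snd (g : α × β → γ) (s : γ) :
    prob (inducedPMF p hp0 hp1 W hW0 hW1) (fun ω => g ω.2) s = ∑ a with g a = s, p a := by
  rw [← sum_prob_pair_left _ (fun ω => ω.1)]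
  simp only [prob_inducedPMF_pair]
  rw [Finset.sum_comm]
  simp [← Finset.sum_mul, hW1]

lemma H_inducedPMF_snd_congr [Fintype γ] {m : ℕ} (W' : Fin m → α → ℝ)
    (hW0' : ∀ v x, 0 ≤ W' v x) (hW1' : ∀ x, ∑ v, W' v x = 1) (g : α × β → γ) :
    H (inducedPMF p hp0 hp1 W hW0 hW1) (fun ω => g ω.2)
      = H (inducedPMF p hp0 hp1 W' hW0' hW1') (fun ω => g ω.2) := by
  simp only [H, prob_inducedPMF_snd]

theorem H_timeShare [Fintype γ] {t : ℝ} (hV0 : ∀ v x, 0 ≤ timeShare t W v x)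
    (hV1 : ∀ x, ∑ v, timeShare t W v x = 1) (g : α × β → γ) :
    H (inducedPMF p hp0 hp1 (timeShare t W) hV0 hV1) (fun ω => (ω.1, g ω.2))
      = t * H (inducedPMF p hp0 hp1 W hW0 hW1) (fun ω => (ω.1, g ω.2))
        + (1 - t) * H (inducedPMF p hp0 hp1 W hW0 hW1) (fun ω => g ω.2)
        + Real.binEntropy t / Real.log 2 := by
  set μ := inducedPMF p hp0 hp1 W hW0 hW1
  set μ' := inducedPMF p hp0 hp1 (timeShare t W) hV0 hV1
  have hcast : ∀ v s, prob μ' (fun ω => (ω.1, g ω.2)) (v.castSucc, s)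
      = t * prob μ (fun ω => (ω.1, g ω.2)) (v, s) := by
    intro v s
    simp [μ, μ', prob_inducedPMF_pair, timeShare, Finset.mul_sum, mul_assoc]
  have hlast : ∀ s, prob μ' (fun ω => (ω.1, g ω.2)) (Fin.last n, s)
      = (1 - t) * prob μ (fun ω => g ω.2) s := by
    intro s
    simp [μ, μ', prob_inducedPMF_pair, prob_inducedPMF_snd, timeShare, Finset.mul_sum]
  have hsplit : ∀ F : Fin (n + 1) × γ → ℝ,
      ∑ x, F x = ∑ x : Fin n × γ, F (x.1.castSucc, x.2) + ∑ s, F (Fin.last n, s) := by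
    intro F
    rw [Fintype.sum_prod_type, Fin.sum_univ_castSucc, Fintype.sum_prod_type]
  simp only [H_eq_sum_negMulLog, Real.binEntropy_eq_negMulLog_add_negMulLog_one_sub, hsplit,
    hcast, hlast, Prod.mk.eta, sum_negMulLog_const_mul, sum_prob]
  ring

end InducedPMF

section TimeShareRates

variable {α β : Type*} [Fintype α] [Fintype β] [DecidableEq β] {n : ℕ}
  (p : α × β → ℝ) (hp0 : ∀ a, 0 ≤ p a) (hp1 : ∑ a, p a = 1)
  (W : Fin n → α → ℝ) (hW0 : ∀ v x, 0 ≤ W v x) (hW1 : ∀ x, ∑ v, W v x = 1)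
  {t : ℝ} (hV0 : ∀ v x, 0 ≤ timeShare t W v x) (hV1 : ∀ x, ∑ v, timeShare t W v x = 1)

lemma condMutInfo_timeShare [DecidableEq α] :
    condMutInfo (inducedPMF p hp0 hp1 (timeShare t W) hV0 hV1)
        (fun ω => ω.2.1) (fun ω => ω.1) (fun ω => ω.2.2)
      = t * condMutInfo (inducedPMF p hp0 hp1 W hW0 hW1)
        (fun ω => ω.2.1) (fun ω => ω.1) (fun ω => ω.2.2) := by
  rw [condMutInfo_eq, condMutInfo_eq, H_timeShare p hp0 hp1 W hW0 hW1 hV0 hV1 (fun a => a.2),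
    H_timeShare p hp0 hp1 W hW0 hW1 hV0 hV1 (fun a => (a.1, a.2)),
    H_inducedPMF_snd_congr p hp0 hp1 _ hV0 hV1 W hW0 hW1 (fun a => (a.1, a.2)),
    H_inducedPMF_snd_congr p hp0 hp1 _ hV0 hV1 W hW0 hW1 (fun a => a.2)]
  ring

lemma condH_timeShare {S : Type*} [Fintype S] [DecidableEq S] (f : α → β → S) :
    condH (inducedPMF p hp0 hp1 (timeShare t W) hV0 hV1)
        (fun ω => f ω.2.1 ω.2.2) (fun ω => (ω.1, ω.2.2))
      = t * condH (inducedPMF p hp0 hp1 W hW0 hW1)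
          (fun ω => f ω.2.1 ω.2.2) (fun ω => (ω.1, ω.2.2))
        + (1 - t) * condH (inducedPMF p hp0 hp1 W hW0 hW1)
          (fun ω => f ω.2.1 ω.2.2) (fun ω => ω.2.2) := by
  rw [condH_pair_eq, condH_pair_eq, condH,
    H_timeShare p hp0 hp1 W hW0 hW1 hV0 hV1 (fun a => a.2),
    H_timeShare p hp0 hp1 W hW0 hW1 hV0 hV1 (fun a => (f a.1 a.2, a.2))]
  ring

end TimeShareRates

/-- If `(R_c, R_u)` is in the single-letter region, then for every `a ∈ [0, R_c]` so is
`(R_c − a, R_u + a)`. -/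
theorem cacheRegion_transfer {α β S : Type*} [Fintype α] [DecidableEq α]
    [Fintype β] [DecidableEq β] [Fintype S] [DecidableEq S]
    (p : α × β → ℝ) (hp0 : ∀ a, 0 ≤ p a) (hp1 : ∑ a, p a = 1) (f : α → β → S)
    (R : ℝ × ℝ) (hR : R ∈ cacheRegion p hp0 hp1 f)
    (a : ℝ) (ha0 : 0 ≤ a) (ha1 : a ≤ R.1) :
    (R.1 - a, R.2 + a) ∈ cacheRegion p hp0 hp1 f := by
  obtain ⟨n, W, hW0, hW1, hI, hF⟩ := hR
  set μ := inducedPMF p hp0 hp1 W hW0 hW1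
  set t := 1 - a / R.1
  have ht0 : 0 ≤ t := sub_nonneg.2 (div_le_one_of_le₀ ha1 (ha0.trans ha1))
  have ht1 : t ≤ 1 := sub_le_self _ (div_nonneg ha0 (ha0.trans ha1))
  -- If `R.1 = 0` then `a = 0`, so `a / R.1 * R.1 = a` holds despite the junk value `a / 0 = 0`.
  have hta : (1 - t) * R.1 = a := by
    rw [sub_sub_cancel]
    exact div_mul_cancel_of_imp fun h => le_antisymm (h ▸ ha1) ha0
  have hsum := condH_le_condMutInfo_add_condH μ (fun ω => ω.2.1) (fun ω => ω.1)
    (fun ω => ω.2.2) f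
  refine ⟨n + 1, timeShare t W, timeShare_nonneg ht0 ht1 hW0, sum_timeShare t hW1, ?_, ?_⟩
  · rw [condMutInfo_timeShare p hp0 hp1 W hW0 hW1]
    show t * _ ≤ R.1 - a
    linarith [mul_le_mul_of_nonneg_left hI ht0]
  · rw [condH_timeShare p hp0 hp1 W hW0 hW1]
    show _ ≤ R.2 + a
    linarith [mul_le_mul_of_nonneg_left hF ht0,
      mul_le_mul_of_nonneg_left (hsum.trans (add_le_add hI hF)) (sub_nonneg.2 ht1)]

end Caching
end

section
/- Let X ~ Bernoulli(1/2), Y ~ Uniform{1,2} independent of X, f_1(X,Y) = X·1{Y=1}, f_2(X,Y) = X. Then the set of pairs (R_c, R_u) such that there exists a conditional pmf p_{V|X} with R_c ≥ I(X; V | f_1(X,Y), Y) and R_u ≥ H(f_1(X,Y) | Y) + H(f_2(X,Y) | V, f_1(X,Y), Y) equals the set of pairs with R_c ≥ r/2 and R_u ≥ 1/2 + (1/2)(1 − r)^+ for some r ≥ 0. -/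
open scoped BigOperators

namespace Caching

variable {Ω : Type*} [Fintype Ω]

/-- `X ~ Bernoulli(1/2)` and `Y ~ Uniform{1,2}` independent of `X`. -/
noncomputable def pEx : Bool × Fin 2 → ℝ := fun _ => 1 / 4

/-- `f₁(X, Y) = X·1{Y = 1}` (the request `Y = 1` is encoded as `y = 0`). -/
def f1Ex : Bool → Fin 2 → Bool := fun x y => if y = 0 then x else false

/-- `f₂(X, Y) = X`. -/
def f2Ex : Bool → Fin 2 → Bool := fun x _ => x

/-- The rate region of Example 2: pairs `(R_c, R_u)` with
`R_c ≥ I(X; V | f₁(X,Y), Y)` and `R_u ≥ H(f₁(X,Y) | Y) + H(f₂(X,Y) | V, f₁(X,Y), Y)`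
for some test channel `p_{V|X}` over a finite alphabet. -/
noncomputable def exRegion (hp0 : ∀ a, 0 ≤ pEx a) (hp1 : ∑ a, pEx a = 1) : Set (ℝ × ℝ) :=
  {R | ∃ (n : ℕ) (W : Fin n → Bool → ℝ) (hW0 : ∀ v x, 0 ≤ W v x) (hW1 : ∀ x, ∑ v, W v x = 1),
    R.1 ≥ condMutInfo (inducedPMF pEx hp0 hp1 W hW0 hW1)
            (fun ω => ω.2.1) (fun ω => ω.1) (fun ω => (f1Ex ω.2.1 ω.2.2, ω.2.2)) ∧
    R.2 ≥ condH (inducedPMF pEx hp0 hp1 W hW0 hW1)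
            (fun ω => f1Ex ω.2.1 ω.2.2) (fun ω => ω.2.2)
          + condH (inducedPMF pEx hp0 hp1 W hW0 hW1)
              (fun ω => f2Ex ω.2.1 ω.2.2) (fun ω => (ω.1, f1Ex ω.2.1 ω.2.2, ω.2.2))}

open Real

lemma logb_two_quarter : Real.logb 2 (1/4 : ℝ) = -2 := by
  rw [one_div, Real.logb_inv, show (4:ℝ) = 2^(2:ℕ) by norm_num, Real.logb_pow,
    Real.logb_self_eq_one (by norm_num)]
  norm_num

lemma logb_two_half : Real.logb 2 (1/2 : ℝ) = -1 := by
  rw [one_div, Real.logb_inv, Real.logb_self_eq_one (by norm_num)]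

lemma mul_logb_div4 (a : ℝ) (ha : 0 ≤ a) :
    a / 4 * Real.logb 2 (a / 4) = a * Real.logb 2 a / 4 - a / 2 := by
  rcases eq_or_lt_of_le ha with h | h
  · simp [← h]
  · rw [Real.logb_div h.ne' (by norm_num), show Real.logb 2 4 = 2 by
      rw [show (4:ℝ) = 2^(2:ℕ) by norm_num, Real.logb_pow, Real.logb_self_eq_one (by norm_num)]; norm_num]
    ring

section Aux
variable {n : ℕ} (W : Fin n → Bool → ℝ) (hW0 : ∀ v x, 0 ≤ W v x)
  (hW1 : ∀ x, ∑ v, W v x = 1) (hp0 : ∀ a, 0 ≤ pEx a) (hp1 : ∑ a, pEx a = 1)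

lemma prob_eq {α : Type*} [DecidableEq α] (T : Fin n × Bool × Fin 2 → α) (t : α) :
    prob (inducedPMF pEx hp0 hp1 W hW0 hW1) T t
    = ∑ v, ((if T (v, false, 0) = t then W v false * (1/4) else 0)
          + (if T (v, false, 1) = t then W v false * (1/4) else 0)
          + (if T (v, true, 0) = t then W v true * (1/4) else 0)
          + (if T (v, true, 1) = t then W v true * (1/4) else 0)) := by
  rw [prob, Fintype.sum_prod_type]
  refine Finset.sum_congr rfl fun v _ => ?_
  rw [Fintype.sum_prod_type]
  simp only [Fintype.sum_bool, Fin.sum_univ_two, inducedPMF, pEx]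
  ring_nf

-- E1 : H(f1, Y) = 3/2
lemma entE1 : H (inducedPMF pEx hp0 hp1 W hW0 hW1)
    (fun ω => (f1Ex ω.2.1 ω.2.2, ω.2.2)) = 3/2 := by
  have hpe : ∀ t, prob (inducedPMF pEx hp0 hp1 W hW0 hW1)
      (fun ω => (f1Ex ω.2.1 ω.2.2, ω.2.2)) t = _ := prob_eq W hW0 hW1 hp0 hp1 _
  rw [H]
  simp only [hpe]
  rw [Fintype.sum_prod_type]
  simp only [Fintype.sum_bool, Fin.sum_univ_two, f1Ex]
  norm_num [Finset.sum_add_distrib, ← Finset.sum_mul, hW1, logb_two_quarter, logb_two_half]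

end Aux
noncomputable def entA {n : ℕ} (W : Fin n → Bool → ℝ) : ℝ :=
  ∑ v, (W v false * Real.logb 2 (W v false) + W v true * Real.logb 2 (W v true))

noncomputable def entB {n : ℕ} (W : Fin n → Bool → ℝ) : ℝ :=
  ∑ v, ((W v false + W v true) * Real.logb 2 (W v false + W v true))

section Aux2
variable {n : ℕ} (W : Fin n → Bool → ℝ) (hW0 : ∀ v x, 0 ≤ W v x)
  (hW1 : ∀ x, ∑ v, W v x = 1) (hp0 : ∀ a, 0 ≤ pEx a) (hp1 : ∑ a, pEx a = 1)

-- E3 : H(V, f1, Y) = 2 - A/4 - B/4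
lemma entE3 : H (inducedPMF pEx hp0 hp1 W hW0 hW1)
    (fun ω => (ω.1, f1Ex ω.2.1 ω.2.2, ω.2.2)) = 2 - entA W / 4 - entB W / 4 := by
  have hpe : ∀ t, prob (inducedPMF pEx hp0 hp1 W hW0 hW1)
      (fun ω => (ω.1, f1Ex ω.2.1 ω.2.2, ω.2.2)) t = _ := prob_eq W hW0 hW1 hp0 hp1 _
  rw [H]
  simp only [hpe]
  rw [Fintype.sum_prod_type]
  simp only [Fintype.sum_prod_type, Fintype.sum_bool, Fin.sum_univ_two, f1Ex,
    Prod.mk.injEq]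
  norm_num [ite_add_ite, Finset.sum_ite_eq']
  have key : ∀ v : Fin n,
      W v true * (1/4) * Real.logb 2 (W v true * (1/4)) +
        (W v false * (1/4) * Real.logb 2 (W v false * (1/4)) +
          (W v false * (1/4) + W v true * (1/4)) * Real.logb 2 (W v false * (1/4) + W v true * (1/4)))
      = (W v false * Real.logb 2 (W v false) + W v true * Real.logb 2 (W v true)) / 4
        + (W v false + W v true) * Real.logb 2 (W v false + W v true) / 4
        - (W v false + W v true) := by
    intro v
    have h1 := mul_logb_div4 (W v true) (hW0 v true)
    have h2 := mul_logb_div4 (W v false) (hW0 v false)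
    have h3 := mul_logb_div4 (W v false + W v true) (add_nonneg (hW0 v false) (hW0 v true))
    rw [show W v false * (1/4) + W v true * (1/4) = (W v false + W v true) / 4 by ring,
      show W v true * (1/4) = W v true / 4 by ring,
      show W v false * (1/4) = W v false / 4 by ring, h1, h2, h3]
    ring
  rw [Finset.sum_congr rfl (fun v _ => key v)]
  have hs2 : ∑ v : Fin n, (W v false + W v true) = 2 := by
    rw [Finset.sum_add_distrib, hW1 false, hW1 true]; norm_num
  rw [Finset.sum_sub_distrib, Finset.sum_add_distrib, ← Finset.sum_div, ← Finset.sum_div,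
    hs2, entA, entB]
  ring

end Aux2
section Aux3b
variable {n : ℕ} (W : Fin n → Bool → ℝ)

lemma finAux (hW0 : ∀ v x, 0 ≤ W v x) (hW1 : ∀ x, ∑ v, W v x = 1) :
    -∑ v : Fin n,
        (W v false * (1 / 4) * Real.logb 2 (W v false * (1 / 4)) +
          W v false * (1 / 4) * Real.logb 2 (W v false * (1 / 4))) +
      -∑ v : Fin n,
        (W v true * (1 / 4) * Real.logb 2 (W v true * (1 / 4)) +
          W v true * (1 / 4) * Real.logb 2 (W v true * (1 / 4))) =
    2 - entA W / 2 := by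
  have key : ∀ (x : Bool) (v : Fin n),
      W v x * (1/4) * Real.logb 2 (W v x * (1/4)) + W v x * (1/4) * Real.logb 2 (W v x * (1/4))
      = (W v x * Real.logb 2 (W v x)) / 2 - W v x := by
    intro x v
    have h := mul_logb_div4 (W v x) (hW0 v x)
    rw [show W v x * (1/4) = W v x / 4 by ring, h]; ring
  rw [Finset.sum_congr rfl (fun v _ => key false v),
    Finset.sum_congr rfl (fun v _ => key true v),
    Finset.sum_sub_distrib, Finset.sum_sub_distrib, ← Finset.sum_div, ← Finset.sum_div,
    hW1, hW1, entA, Finset.sum_add_distrib]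
  ring

end Aux3b
section Aux3
variable {n : ℕ} (W : Fin n → Bool → ℝ) (hW0 : ∀ v x, 0 ≤ W v x)
  (hW1 : ∀ x, ∑ v, W v x = 1) (hp0 : ∀ a, 0 ≤ pEx a) (hp1 : ∑ a, pEx a = 1)

-- E5 : H(Y) = 1
lemma entE5 : H (inducedPMF pEx hp0 hp1 W hW0 hW1) (fun ω => ω.2.2) = 1 := by
  have hpe : ∀ t, prob (inducedPMF pEx hp0 hp1 W hW0 hW1) (fun ω => ω.2.2) t = _ :=
    prob_eq W hW0 hW1 hp0 hp1 _
  rw [H]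
  simp only [hpe]
  simp only [Fin.sum_univ_two]
  norm_num [Finset.sum_add_distrib, ← Finset.sum_mul, hW1, logb_two_half]

-- E2 : H(X, (f1, Y)) = 2
lemma entE2 : H (inducedPMF pEx hp0 hp1 W hW0 hW1)
    (fun ω => (ω.2.1, (f1Ex ω.2.1 ω.2.2, ω.2.2))) = 2 := by
  have hpe : ∀ t, prob (inducedPMF pEx hp0 hp1 W hW0 hW1)
      (fun ω => (ω.2.1, (f1Ex ω.2.1 ω.2.2, ω.2.2))) t = _ := prob_eq W hW0 hW1 hp0 hp1 _
  rw [H]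
  simp only [hpe]
  simp only [Fintype.sum_prod_type, Fintype.sum_bool, Fin.sum_univ_two, f1Ex, Prod.mk.injEq]
  norm_num [Finset.sum_add_distrib, ← Finset.sum_mul, hW1, logb_two_quarter]

-- E4 : H((X,V), (f1, Y)) = 2 - A/2
lemma entE4 : H (inducedPMF pEx hp0 hp1 W hW0 hW1)
    (fun ω => ((ω.2.1, ω.1), (f1Ex ω.2.1 ω.2.2, ω.2.2))) = 2 - entA W / 2 := by
  have hpe : ∀ t, prob (inducedPMF pEx hp0 hp1 W hW0 hW1)
      (fun ω => ((ω.2.1, ω.1), (f1Ex ω.2.1 ω.2.2, ω.2.2))) t = _ := prob_eq W hW0 hW1 hp0 hp1 _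
  rw [H]
  simp only [hpe]
  simp only [Fintype.sum_prod_type, Fintype.sum_bool, Fin.sum_univ_two, f1Ex, Prod.mk.injEq]
  norm_num [ite_add_ite, Finset.sum_ite_eq']
  exact finAux W hW0 hW1

-- E7 : H(f2, (V, f1, Y)) = 2 - A/2
lemma entE7 : H (inducedPMF pEx hp0 hp1 W hW0 hW1)
    (fun ω => (f2Ex ω.2.1 ω.2.2, (ω.1, f1Ex ω.2.1 ω.2.2, ω.2.2))) = 2 - entA W / 2 := by
  have hpe : ∀ t, prob (inducedPMF pEx hp0 hp1 W hW0 hW1)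
      (fun ω => (f2Ex ω.2.1 ω.2.2, (ω.1, f1Ex ω.2.1 ω.2.2, ω.2.2))) t = _ :=
    prob_eq W hW0 hW1 hp0 hp1 _
  rw [H]
  simp only [hpe]
  simp only [Fintype.sum_prod_type, Fintype.sum_bool, Fin.sum_univ_two, f1Ex, f2Ex, Prod.mk.injEq]
  norm_num [ite_add_ite, Finset.sum_ite_eq']
  exact finAux W hW0 hW1

end Aux3
section Aux4
variable {n : ℕ} (W : Fin n → Bool → ℝ) (hW0 : ∀ v x, 0 ≤ W v x)
  (hW1 : ∀ x, ∑ v, W v x = 1) (hp0 : ∀ a, 0 ≤ pEx a) (hp1 : ∑ a, pEx a = 1)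

lemma keyCMI : condMutInfo (inducedPMF pEx hp0 hp1 W hW0 hW1)
    (fun ω => ω.2.1) (fun ω => ω.1) (fun ω => (f1Ex ω.2.1 ω.2.2, ω.2.2))
    = 1/2 + (entA W - entB W)/4 := by
  simp only [condMutInfo, condH]
  rw [entE1 W hW0 hW1 hp0 hp1, entE2 W hW0 hW1 hp0 hp1, entE3 W hW0 hW1 hp0 hp1,
    entE4 W hW0 hW1 hp0 hp1]
  ring

lemma keySum : condH (inducedPMF pEx hp0 hp1 W hW0 hW1)
      (fun ω => f1Ex ω.2.1 ω.2.2) (fun ω => ω.2.2)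
    + condH (inducedPMF pEx hp0 hp1 W hW0 hW1)
      (fun ω => f2Ex ω.2.1 ω.2.2) (fun ω => (ω.1, f1Ex ω.2.1 ω.2.2, ω.2.2))
    = 1/2 + (entB W - entA W)/4 := by
  simp only [condH]
  rw [entE1 W hW0 hW1 hp0 hp1, entE5 W hW0 hW1 hp0 hp1, entE3 W hW0 hW1 hp0 hp1,
    entE7 W hW0 hW1 hp0 hp1]
  ring

end Aux4
lemma pt_lower {a b : ℝ} (ha : 0 ≤ a) (hb : 0 ≤ b) :
    a * Real.logb 2 a + b * Real.logb 2 b ≤ (a + b) * Real.logb 2 (a + b) := by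
  have key : ∀ x y : ℝ, 0 ≤ x → 0 ≤ y → x * Real.logb 2 x ≤ x * Real.logb 2 (x + y) := by
    intro x y hx hy
    rcases eq_or_lt_of_le hx with h | h
    · simp [← h]
    · exact mul_le_mul_of_nonneg_left
        (Real.logb_le_logb_of_le (by norm_num) h (by linarith)) (le_of_lt h)
  have h1 := key a b ha hb
  have h2 := key b a hb ha
  rw [add_comm b a] at h2
  nlinarith [h1, h2]

lemma pt_upper {a b : ℝ} (ha : 0 ≤ a) (hb : 0 ≤ b) :
    (a + b) * Real.logb 2 (a + b) ≤ a * Real.logb 2 a + b * Real.logb 2 b + (a + b) := by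
  have hlog2 : (0:ℝ) < Real.log 2 := Real.log_pos (by norm_num)
  rcases eq_or_lt_of_le ha with h | h
  · simp [← h]; linarith
  rcases eq_or_lt_of_le hb with h' | h'
  · simp [← h']; linarith
  have hs : 0 < a + b := by linarith
  have e1 : Real.log ((a+b) / (2*a)) ≤ (a+b)/(2*a) - 1 := Real.log_le_sub_one_of_pos (by positivity)
  have e2 : Real.log ((a+b) / (2*b)) ≤ (a+b)/(2*b) - 1 := Real.log_le_sub_one_of_pos (by positivity)
  have d1 : Real.log ((a+b) / (2*a)) = Real.log (a+b) - Real.log 2 - Real.log a := by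
    rw [Real.log_div hs.ne' (by positivity), Real.log_mul (by norm_num) h.ne']; ring
  have d2 : Real.log ((a+b) / (2*b)) = Real.log (a+b) - Real.log 2 - Real.log b := by
    rw [Real.log_div hs.ne' (by positivity), Real.log_mul (by norm_num) h'.ne']; ring
  have m1 : a * Real.log ((a+b)/(2*a)) ≤ (a+b)/2 - a := by
    calc a * Real.log ((a+b)/(2*a)) ≤ a * ((a+b)/(2*a) - 1) :=
          mul_le_mul_of_nonneg_left e1 ha
      _ = (a+b)/2 - a := by field_simp
  have m2 : b * Real.log ((a+b)/(2*b)) ≤ (a+b)/2 - b := by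
    calc b * Real.log ((a+b)/(2*b)) ≤ b * ((a+b)/(2*b) - 1) :=
          mul_le_mul_of_nonneg_left e2 hb
      _ = (a+b)/2 - b := by field_simp
  rw [d1] at m1; rw [d2] at m2
  have core : (a+b) * Real.log (a+b) ≤ a * Real.log a + b * Real.log b + (a+b) * Real.log 2 := by
    nlinarith [m1, m2]
  simp only [Real.logb]
  rw [show (a+b) * (Real.log (a+b) / Real.log 2) = ((a+b) * Real.log (a+b)) / Real.log 2 by ring,
    show a * (Real.log a / Real.log 2) + b * (Real.log b / Real.log 2) + (a+b)
        = (a * Real.log a + b * Real.log b + (a+b) * Real.log 2) / Real.log 2 by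
      field_simp]
  exact (div_le_div_iff_of_pos_right hlog2).mpr core

section Aux5
variable {n : ℕ} (W : Fin n → Bool → ℝ) (hW0 : ∀ v x, 0 ≤ W v x)
  (hW1 : ∀ x, ∑ v, W v x = 1)

lemma entDiff_nonneg (hW0 : ∀ v x, 0 ≤ W v x) : entA W ≤ entB W := by
  rw [entA, entB]
  exact Finset.sum_le_sum fun v _ => pt_lower (hW0 v false) (hW0 v true)

lemma entDiff_le_two (hW0 : ∀ v x, 0 ≤ W v x) (hW1 : ∀ x, ∑ v, W v x = 1) :
    entB W ≤ entA W + 2 := by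
  rw [entA, entB]
  have : ∑ v : Fin n, (W v false + W v true) = 2 := by
    rw [Finset.sum_add_distrib, hW1 false, hW1 true]; norm_num
  calc ∑ v : Fin n, (W v false + W v true) * Real.logb 2 (W v false + W v true)
      ≤ ∑ v : Fin n, (W v false * Real.logb 2 (W v false) + W v true * Real.logb 2 (W v true)
          + (W v false + W v true)) :=
        Finset.sum_le_sum fun v _ => pt_upper (hW0 v false) (hW0 v true)
    _ = (∑ v : Fin n, (W v false * Real.logb 2 (W v false) + W v true * Real.logb 2 (W v true))) + 2 := by
        rw [Finset.sum_add_distrib, this]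

end Aux5
noncomputable def binEnt (t : ℝ) : ℝ := -(t * Real.logb 2 t + (1-t) * Real.logb 2 (1-t))

lemma binEnt_cont : Continuous binEnt := by
  have : binEnt = fun t => -((t * Real.log t) / Real.log 2 + ((1-t) * Real.log (1-t)) / Real.log 2) := by
    funext t; simp only [binEnt, Real.logb]; ring
  rw [this]
  exact (((Real.continuous_mul_log.div_const _).add
    (((Real.continuous_mul_log.comp (continuous_const.sub continuous_id)).div_const _)))).neg

lemma binEnt_zero : binEnt 0 = 0 := by simp [binEnt]

lemma binEnt_half : binEnt (1/2) = 1 := by norm_num [binEnt, logb_two_half]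

noncomputable def bscW (ε : ℝ) : Fin 2 → Bool → ℝ := fun v x =>
  if v = 0 then (if x = true then ε else 1 - ε) else (if x = true then 1 - ε else ε)

lemma bscW_nonneg {ε : ℝ} (h0 : 0 ≤ ε) (h1 : ε ≤ 1) : ∀ v x, 0 ≤ bscW ε v x := by
  intro v x
  unfold bscW
  split <;> split <;> linarith

lemma bscW_sum (ε : ℝ) : ∀ x, ∑ v : Fin 2, bscW ε v x = 1 := by
  intro x
  rw [Fin.sum_univ_two]
  cases x <;> norm_num [bscW]

lemma bscW_entA (ε : ℝ) :
    entA (bscW ε) = 2 * (ε * Real.logb 2 ε + (1-ε) * Real.logb 2 (1-ε)) := by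
  rw [entA, Fin.sum_univ_two]
  norm_num [bscW]
  ring

lemma bscW_entB (ε : ℝ) : entB (bscW ε) = 0 := by
  rw [entB, Fin.sum_univ_two]
  norm_num [bscW]

/-- Closed-form evaluation of Example 2: the region equals
`{(R_c, R_u) : ∃ r ≥ 0, R_c ≥ r/2 ∧ R_u ≥ 1/2 + (1/2)(1 − r)⁺}`. -/
theorem exRegion_eval (hp0 : ∀ a, 0 ≤ pEx a) (hp1 : ∑ a, pEx a = 1) :
    exRegion hp0 hp1
      = {R : ℝ × ℝ | ∃ r : ℝ, 0 ≤ r ∧ R.1 ≥ r / 2 ∧ R.2 ≥ 1 / 2 + (1 / 2) * max (1 - r) 0} := by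
  ext R
  constructor
  · rintro ⟨n, W, hW0, hW1, h1, h2⟩
    have hl := entDiff_nonneg W hW0
    have hu := entDiff_le_two W hW0 hW1
    rw [keyCMI W hW0 hW1 hp0 hp1] at h1
    rw [keySum W hW0 hW1 hp0 hp1] at h2
    refine ⟨1 - (entB W - entA W)/2, by linarith, by linarith, ?_⟩
    rw [max_eq_left (by linarith)]
    linarith
  · rintro ⟨r, hr0, hc, hu⟩
    set c := max (1 - r) 0 with hcdef
    have hc0 : 0 ≤ c := le_max_right _ _
    have hc1 : c ≤ 1 := max_le (by linarith) (by norm_num)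
    have hcr : 1 - r ≤ c := le_max_left _ _
    obtain ⟨ε, hεmem, hgε⟩ : ∃ ε ∈ Set.Icc (0:ℝ) (1/2), binEnt ε = c := by
      have := intermediate_value_Icc (by norm_num : (0:ℝ) ≤ 1/2) binEnt_cont.continuousOn
      have hmem : c ∈ Set.Icc (binEnt 0) (binEnt (1/2)) := by
        rw [binEnt_zero, binEnt_half]; exact ⟨hc0, hc1⟩
      obtain ⟨ε, hε, hgε⟩ := this hmem
      exact ⟨ε, hε, hgε⟩
    obtain ⟨hε0, hε1⟩ := hεmem
    have hW0 := bscW_nonneg hε0 (by linarith)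
    have hW1 := bscW_sum ε
    refine ⟨2, bscW ε, hW0, hW1, ?_, ?_⟩
    · rw [keyCMI (bscW ε) hW0 hW1 hp0 hp1, bscW_entA, bscW_entB]
      have : ε * Real.logb 2 ε + (1-ε) * Real.logb 2 (1-ε) = -c := by
        have := hgε; unfold binEnt at this; linarith
      rw [this]
      linarith
    · rw [keySum (bscW ε) hW0 hW1 hp0 hp1, bscW_entA, bscW_entB]
      have : ε * Real.logb 2 ε + (1-ε) * Real.logb 2 (1-ε) = -c := by
        have := hgε; unfold binEnt at this; linarith
      rw [this]
      linarith

end Caching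
end
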